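/- Let $\mathcal{B}$ be a collection of rectangular parallelepipeds in $\mathbb{R}^3$ containing, for some fixed $j \in \mathbb{Z}$, all parallelepipeds with side lengths $(s, 2^j s, t)$, $s, t > 0$, with sides parallel to the axes. Then $M_{\mathcal{B}}$ does not satisfy $|\{x : M_{\mathcal{B}} f(x) > \alpha\}| \leq C \int \phi(|f|/\alpha)$ for any convex increasing $\phi : [0,\infty) \to [0,\infty)$ with $\lim_{x\to\infty} \phi(x)/(x\log(1+x)) = 0$. -/

import Mathlib

open MeasureTheory Filter
open scoped ENNReal

/-- `R` is an axis-parallel rectangular parallelepiped in `ℝ³` with side lengths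
`(s, 2^j s, t)` for some `s, t > 0` and some `j ∈ S`. -/
def ZygBox (S : Set ℤ) (R : Set (Fin 3 → ℝ)) : Prop :=
  ∃ (a : Fin 3 → ℝ) (s t : ℝ) (j : ℤ), j ∈ S ∧ 0 < s ∧ 0 < t ∧
    R = Set.Icc a (fun i => a i + ![s, (2:ℝ) ^ j * s, t] i)

/-- The geometric maximal operator associated to the family of sets satisfying `P`. -/
noncomputable def maxOp (P : Set (Fin 3 → ℝ) → Prop) (f : (Fin 3 → ℝ) → ℝ)
    (x : Fin 3 → ℝ) : ℝ≥0∞ :=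
  ⨆ (R : Set (Fin 3 → ℝ)) (_ : P R) (_ : x ∈ R),
    (∫⁻ y in R, ENNReal.ofReal |f y|) / volume R

/-!
Test the maximal operator on `f = 𝟙_Q` with `Q = [0,1] × [0,2^j] × [0,1]`. For `k ≤ n` the box
`[0,2^(n-k)] × [0,2^j 2^(n-k)] × [0,4^(k+1)]` contains `Q` and has volume `4^(n+1) |Q|`, so
`M f > 1/(8·4^n)` on it, in particular on its top slab `{4^k ≤ x₂ < 4^(k+1)}`, of volume
`3·4^n |Q|`. These `n+1` slabs are disjoint, so `|{M f > 1/(8·4^n)}| ≥ 3 (n+1) 4^n |Q|`, while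
`∫ φ(f/α) = φ(8·4^n) |Q|`. A weak type bound would thus give `φ(K) ≳ K log K` along
`K = 8·4^n`, which is incompatible with `φ(x) = o(x log(1+x))`.
-/

open Set

lemma lintegral_comp_indicator_one {X : Type*} [MeasurableSpace X] (μ : Measure X) {Q : Set X}
    (hQ : MeasurableSet Q) {g : ℝ → ℝ≥0∞} (hg : g 0 = 0) :
    ∫⁻ x, g (Q.indicator 1 x) ∂μ = g 1 * μ Q := by
  rw [← Function.comp_def g, ← indicator_comp_of_zero hg, Function.comp_def,
    lintegral_indicator hQ]
  simp

lemma setLIntegral_indicator_one_of_subset {X : Type*} [MeasurableSpace X] (μ : Measure X)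
    {Q R : Set X} (hQ : MeasurableSet Q) (hQR : Q ⊆ R) :
    ∫⁻ x in R, ENNReal.ofReal |Q.indicator 1 x| ∂μ = μ Q := by
  rw [lintegral_comp_indicator_one _ hQ (g := fun y => ENNReal.ofReal |y|) (by simp),
    Measure.restrict_apply hQ, inter_eq_left.mpr hQR]
  simp

lemma volume_div_volume_le_maxOp (P : Set (Fin 3 → ℝ) → Prop) {Q R : Set (Fin 3 → ℝ)}
    (hQ : MeasurableSet Q) (hPR : P R) (hQR : Q ⊆ R) {x : Fin 3 → ℝ} (hx : x ∈ R) :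
    volume Q / volume R ≤ maxOp P (Q.indicator 1) x := by
  rw [← setLIntegral_indicator_one_of_subset volume hQ hQR]
  exact le_iSup₂_of_le R hPR (le_iSup_of_le hx le_rfl)

lemma zygBox_Icc_zero (j : ℤ) {s t : ℝ} (hs : 0 < s) (ht : 0 < t) :
    ZygBox {j} (Icc 0 ![s, 2 ^ j * s, t]) :=
  ⟨0, s, t, j, rfl, hs, ht, by simp⟩

lemma volume_Icc_zero_vecCons {a b d : ℝ} (ha : 0 ≤ a) (hb : 0 ≤ b) :
    volume (Icc (0 : Fin 3 → ℝ) ![a, b, d]) = ENNReal.ofReal (a * b * d) := by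
  rw [Real.volume_Icc_pi, Fin.prod_univ_three, ENNReal.ofReal_mul (by positivity),
    ENNReal.ofReal_mul ha]
  simp

def slab (c s t : ℝ) : Set (Fin 3 → ℝ) :=
  univ.pi ![Icc 0 s, Icc 0 (c * s), Ico t (4 * t)]

lemma measurableSet_slab (c s t : ℝ) : MeasurableSet (slab c s t) :=
  .univ_pi fun i => by fin_cases i <;> simp [measurableSet_Icc, measurableSet_Ico]

lemma volume_slab {c s : ℝ} (hc : 0 ≤ c) (hs : 0 ≤ s) (t : ℝ) :
    volume (slab c s t) = ENNReal.ofReal (s * (c * s) * (3 * t)) := by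
  rw [slab, volume_pi_pi, Fin.prod_univ_three, ENNReal.ofReal_mul (by positivity),
    ENNReal.ofReal_mul hs]
  simp only [Matrix.cons_val_zero, Matrix.cons_val_one, Matrix.cons_val_two, Matrix.head_cons,
    Matrix.tail_cons, Real.volume_Icc, Real.volume_Ico, sub_zero]
  ring_nf

lemma slab_subset_Icc {c s t : ℝ} (ht : 0 ≤ t) : slab c s t ⊆ Icc 0 ![s, c * s, 4 * t] := by
  intro x hx
  have h0 : x 0 ∈ Icc 0 s := hx 0 trivial
  have h1 : x 1 ∈ Icc 0 (c * s) := hx 1 trivial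
  have h2 : x 2 ∈ Ico t (4 * t) := hx 2 trivial
  refine ⟨fun i => ?_, fun i => ?_⟩ <;> fin_cases i
  exacts [h0.1, h1.1, ht.trans h2.1, h0.2, h1.2, h2.2.le]

lemma disjoint_slab_four_pow {k l : ℕ} (hkl : k < l) (c s s' : ℝ) :
    Disjoint (slab c s (4 ^ k)) (slab c s' (4 ^ l)) := by
  refine disjoint_left.mpr fun x hxk hxl => ?_
  have hk : x 2 < 4 * 4 ^ k := (hxk 2 trivial).2
  have hl : (4 : ℝ) ^ l ≤ x 2 := (hxl 2 trivial).1
  have : (4 : ℝ) * 4 ^ k ≤ 4 ^ l := by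
    rw [← pow_succ']
    exact pow_le_pow_right₀ (by norm_num) hkl
  linarith

section LevelSet

variable {B : Set (Set (Fin 3 → ℝ))} {c : ℝ}

lemma slab_subset_levelSet {s t α : ℝ} (hc : 0 < c)
    (hB : ∀ s t : ℝ, 0 < s → 0 < t → Icc 0 ![s, c * s, t] ∈ B) (hs : 1 ≤ s) (ht : 1 ≤ 4 * t)
    (hα : α * (s * s * (4 * t)) < 1) :
    slab c s t ⊆ {x | ENNReal.ofReal α < maxOp (· ∈ B) ((Icc 0 ![1, c, 1]).indicator 1) x} := by
  intro x hx
  have hQR : Icc 0 ![1, c, 1] ⊆ Icc (0 : Fin 3 → ℝ) ![s, c * s, 4 * t] := by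
    refine Icc_subset_Icc le_rfl fun i => ?_
    fin_cases i
    exacts [hs, le_mul_of_one_le_right hc.le hs, ht]
  refine lt_of_lt_of_le ?_ (volume_div_volume_le_maxOp _ measurableSet_Icc
    (hB s (4 * t) (by linarith) (by linarith)) hQR (slab_subset_Icc (by linarith) hx))
  rw [volume_Icc_zero_vecCons zero_le_one hc.le, volume_Icc_zero_vecCons (by linarith)
    (by positivity), ← ENNReal.ofReal_div_of_pos (by positivity),
    ENNReal.ofReal_lt_ofReal_iff (by positivity), lt_div_iff₀ (by positivity)]
  nlinarith

lemma volume_levelSet_indicator_ge (hc : 0 < c)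
    (hB : ∀ s t : ℝ, 0 < s → 0 < t → Icc 0 ![s, c * s, t] ∈ B) (n : ℕ) :
    ENNReal.ofReal ((n + 1) * (3 * 4 ^ n * c)) ≤ volume {x | ENNReal.ofReal (1 / (8 * 4 ^ n)) <
      maxOp (· ∈ B) ((Icc 0 ![1, c, 1]).indicator 1) x} := by
  let S : ℕ → Set (Fin 3 → ℝ) := fun k => slab c (2 ^ (n - k)) (4 ^ k)
  have hsq : ∀ k ≤ n, (2 : ℝ) ^ (n - k) * 2 ^ (n - k) * 4 ^ k = 4 ^ n := fun k hk => by
    rw [← mul_pow, show (2 : ℝ) * 2 = 4 by norm_num, ← pow_add, Nat.sub_add_cancel hk]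
  have hS_vol : ∀ k ∈ Finset.range (n + 1), volume (S k) = ENNReal.ofReal (3 * 4 ^ n * c) := by
    intro k hk
    rw [volume_slab hc.le (by positivity), ← hsq k (Nat.lt_succ_iff.mp (Finset.mem_range.mp hk))]
    ring_nf
  have hS_disj : (Finset.range (n + 1) : Set ℕ).PairwiseDisjoint S := by
    intro k _ l _ hkl
    rcases lt_or_gt_of_ne hkl with h | h
    exacts [disjoint_slab_four_pow h _ _ _, (disjoint_slab_four_pow h _ _ _).symm]
  have hS_sub : ∀ k ∈ Finset.range (n + 1), S k ⊆ {x | ENNReal.ofReal (1 / (8 * 4 ^ n)) <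
      maxOp (· ∈ B) ((Icc 0 ![1, c, 1]).indicator 1) x} := by
    intro k hk
    have h4 : (1 : ℝ) ≤ 4 ^ k := one_le_pow₀ (by norm_num)
    refine slab_subset_levelSet hc hB (one_le_pow₀ one_le_two) (by linarith) ?_
    have := hsq k (Nat.lt_succ_iff.mp (Finset.mem_range.mp hk))
    field_simp
    nlinarith [pow_pos (by norm_num : (0 : ℝ) < 4) n]
  calc ENNReal.ofReal ((n + 1) * (3 * 4 ^ n * c))
      = ∑ k ∈ Finset.range (n + 1), volume (S k) := by
        rw [Finset.sum_congr rfl hS_vol, Finset.sum_const, Finset.card_range, nsmul_eq_mul,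
          ENNReal.ofReal_mul (by positivity)]
        norm_cast
    _ = volume (⋃ k ∈ Finset.range (n + 1), S k) :=
        (measure_biUnion_finset hS_disj fun k _ => measurableSet_slab _ _ _).symm
    _ ≤ _ := measure_mono (iUnion₂_subset hS_sub)

lemma mul_four_pow_le_of_weakType (hc : 0 < c)
    (hB : ∀ s t : ℝ, 0 < s → 0 < t → Icc 0 ![s, c * s, t] ∈ B) {φ : ℝ → ℝ} (hφ0 : φ 0 = 0)
    {C : ℝ} (hC : 0 < C)
    (hweak : ∀ (f : (Fin 3 → ℝ) → ℝ) (α : ℝ), 0 < α →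
      volume {x | ENNReal.ofReal α < maxOp (· ∈ B) f x}
        ≤ ENNReal.ofReal C * ∫⁻ x, ENNReal.ofReal (φ (|f x| / α))) (n : ℕ) :
    3 * (n + 1) * 4 ^ n ≤ C * φ (8 * 4 ^ n) := by
  have h := (volume_levelSet_indicator_ge hc hB n).trans
    (hweak _ (1 / (8 * 4 ^ n)) (by positivity))
  rw [lintegral_comp_indicator_one volume measurableSet_Icc
    (g := fun y => ENNReal.ofReal (φ (|y| / (1 / (8 * 4 ^ n))))) (by simp [hφ0]),
    volume_Icc_zero_vecCons zero_le_one hc.le, ← ENNReal.ofReal_mul' (by positivity),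
    ← ENNReal.ofReal_mul hC.le, ENNReal.ofReal_le_ofReal_iff'] at h
  simp only [abs_one, one_div_one_div, one_mul, mul_one] at h
  have hpos : 0 < (n + 1) * (3 * 4 ^ n * c) := by positivity
  refine le_of_mul_le_mul_right ?_ hc
  linarith [h.resolve_right hpos.not_ge]

end LevelSet

lemma not_tendsto_div_mul_log_of_le {φ : ℝ → ℝ} {u : ℕ → ℝ} {δ : ℝ} (hδ : 0 < δ)
    (hu : Tendsto u atTop atTop) (hφ : ∀ n, δ * (u n * Real.log (1 + u n)) ≤ φ (u n)) :
    ¬ Tendsto (fun x => φ x / (x * Real.log (1 + x))) atTop (nhds 0) := by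
  intro h
  have hlower : ∀ᶠ n in atTop, δ ≤ φ (u n) / (u n * Real.log (1 + u n)) := by
    filter_upwards [hu.eventually_gt_atTop 0] with n hn
    rw [le_div_iff₀ (mul_pos hn (Real.log_pos (by linarith)))]
    exact hφ n
  exact hδ.not_ge (ge_of_tendsto (h.comp hu) hlower)

lemma log_one_add_eight_mul_four_pow_le (n : ℕ) :
    Real.log (1 + 8 * 4 ^ n) ≤ 2 * (n + 1) * Real.log 4 := by
  have h4 : (1 : ℝ) ≤ 4 ^ n := one_le_pow₀ (by norm_num)
  have h : (1 : ℝ) + 8 * 4 ^ n ≤ 4 ^ (n + 2) := by rw [pow_add]; linarith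
  calc Real.log (1 + 8 * 4 ^ n) ≤ Real.log (4 ^ (n + 2)) := Real.log_le_log (by positivity) h
    _ = (n + 2) * Real.log 4 := by rw [Real.log_pow]; push_cast; ring
    _ ≤ 2 * (n + 1) * Real.log 4 :=
        mul_le_mul_of_nonneg_right (by linarith [n.cast_nonneg (α := ℝ)])
          (Real.log_nonneg (by norm_num))

theorem stmt10_general (B : Set (Set (Fin 3 → ℝ))) (j : ℤ)
    (hB : ∀ R : Set (Fin 3 → ℝ), ZygBox {j} R → R ∈ B)
    (φ : ℝ → ℝ)
    (hφ0 : φ 0 = 0)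
    (hlim : Tendsto (fun x : ℝ => φ x / (x * Real.log (1 + x))) atTop (nhds 0)) :
    ∀ C : ℝ, 0 < C →
      ¬ (∀ (f : (Fin 3 → ℝ) → ℝ) (α : ℝ), 0 < α →
        volume {x | ENNReal.ofReal α < maxOp (· ∈ B) f x}
          ≤ ENNReal.ofReal C * ∫⁻ x, ENNReal.ofReal (φ (|f x| / α))) := by
  intro C hC hweak
  have hgrowth := mul_four_pow_le_of_weakType (zpow_pos two_pos j)
    (fun s t hs ht => hB _ (zygBox_Icc_zero j hs ht)) hφ0 hC hweak
  refine not_tendsto_div_mul_log_of_le (u := fun n : ℕ => 8 * 4 ^ n)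
    (δ := 3 / (16 * C * Real.log 4)) (by positivity)
    ((tendsto_pow_atTop_atTop_of_one_lt (by norm_num)).const_mul_atTop (by norm_num))
    (fun n => ?_) hlim
  calc 3 / (16 * C * Real.log 4) * (8 * 4 ^ n * Real.log (1 + 8 * 4 ^ n))
      ≤ 3 / (16 * C * Real.log 4) * (8 * 4 ^ n * (2 * (n + 1) * Real.log 4)) := by
        gcongr
        exact log_one_add_eight_mul_four_pow_le n
    _ = 3 * (n + 1) * 4 ^ n / C := by field_simp; ring
    _ ≤ φ (8 * 4 ^ n) := by rw [div_le_iff₀' hC]; exact hgrowth n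

/-- If `𝓑` contains, for some fixed `j ∈ ℤ`, all axis-parallel parallelepipeds with side
lengths `(s, 2^j s, t)`, `s, t > 0`, then `M_𝓑` does not satisfy a weak type estimate
`|{M_𝓑 f > α}| ≤ C ∫ φ(|f|/α)` for any convex increasing `φ : [0,∞) → [0,∞)` with
`φ(x)/(x log(1+x)) → 0` as `x → ∞`. -/
theorem stmt10 (B : Set (Set (Fin 3 → ℝ))) (j : ℤ)
    (hB : ∀ R : Set (Fin 3 → ℝ), ZygBox {j} R → R ∈ B)
    (φ : ℝ → ℝ)
    (hconv : ConvexOn ℝ (Set.Ici 0) φ)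
    (hmono : MonotoneOn φ (Set.Ici 0))
    (hnonneg : ∀ x ∈ Set.Ici (0:ℝ), 0 ≤ φ x)
    (hφ0 : φ 0 = 0)
    (hlim : Tendsto (fun x : ℝ => φ x / (x * Real.log (1 + x))) atTop (nhds 0)) :
    ∀ C : ℝ, 0 < C →
      ¬ (∀ (f : (Fin 3 → ℝ) → ℝ) (α : ℝ), 0 < α →
        volume {x | ENNReal.ofReal α < maxOp (· ∈ B) f x}
          ≤ ENNReal.ofReal C * ∫⁻ x, ENNReal.ofReal (φ (|f x| / α))) :=
  stmt10_general B j hB φ hφ0 hlim
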